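/- Let ψ and Ψ denote respectively the density and the cumulative distribution function of the standard Gaussian measure on ℝ. Then there exists a unique s* > 0 satisfying Ψ(−s*) = 2·s*·ψ(s*). Moreover, for every Σ > 0, the function eff : (0,∞) → ℝ defined by eff(ℓ) = 2·ℓ·Ψ(−ℓ²·√Σ/2) attains its global maximum on (0,∞) at the unique point ℓ* = √(2·s*)·Σ^{−1/4}; that is, eff(ℓ) < eff(ℓ*) for every ℓ ∈ (0,∞) with ℓ ≠ ℓ*. -/

import Mathlib

/-!
Put h(s) = √s·Ψ(-s) (`sqrtTail`). Substituting s = ℓ²√Σ/2 gives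
eff(ℓ) = 2√2·Σ^(-1/4)·h(s), so it suffices to show that h has a strict global maximum on (0,∞)
at s*. Now h'(s) = g(s)/(2√s) with g(s) = Ψ(-s) - 2sψ(s) (`sqrtTailSlope`), and
g'(s) = ψ(s)(2s² - 3). Hence g decreases on [0, √(3/2)] from g(0) = Ψ(0) > 0 and then increases
towards its limit 0 at infinity, so it is negative from √(3/2) on and has exactly one zero s*,
being positive before it and negative after it.
-/

open MeasureTheory ProbabilityTheory

noncomputable section

/-- The density `ψ` of the standard Gaussian measure on `ℝ`. -/
def stdGaussianDensity (t : ℝ) : ℝ := Real.exp (-t ^ 2 / 2) / Real.sqrt (2 * Real.pi)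

/-- The cumulative distribution function `Ψ` of the standard Gaussian measure on `ℝ`. -/
def stdGaussianCDF (t : ℝ) : ℝ := ((gaussianReal 0 1) (Set.Iic t)).toReal

/-- The asymptotic efficiency `eff(ℓ) = 2ℓ·Ψ(-ℓ²√Σ/2)` of MALT with rescaled
time-step `ℓ`, for a given value `Σ > 0`. -/
def maltEff (S ℓ : ℝ) : ℝ := 2 * ℓ * stdGaussianCDF (-(ℓ ^ 2 * Real.sqrt S / 2))

open Set Filter Topology

theorem StrictMonoOn.lt_of_tendsto_atTop {f : ℝ → ℝ} {a l : ℝ} (hf : StrictMonoOn f (Ici a))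
    (hl : Tendsto f atTop (𝓝 l)) {x : ℝ} (hx : a ≤ x) : f x < l := by
  have hx1 : x + 1 ∈ Ici a := by simp only [mem_Ici]; linarith
  calc f x < f (x + 1) := hf hx hx1 (by linarith)
    _ ≤ l := ge_of_tendsto hl <| by
      filter_upwards [eventually_ge_atTop (x + 1)] with t ht
      exact hf.monotoneOn hx1 (le_trans hx1 ht) ht

theorem apply_lt_of_hasDerivAt_pos_of_neg {f f' : ℝ → ℝ} {a c x : ℝ} (hac : a < c)
    (hf : ∀ y ∈ Ioi a, HasDerivAt f (f' y) y) (hpos : ∀ y ∈ Ioo a c, 0 < f' y)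
    (hneg : ∀ y ∈ Ioi c, f' y < 0) (hx : a < x) (hxc : x ≠ c) : f x < f c := by
  rcases hxc.lt_or_gt with hlt | hgt
  · have hmono : StrictMonoOn f (Ioc a c) :=
      strictMonoOn_of_hasDerivWithinAt_pos (convex_Ioc a c)
        (fun y hy => (hf y hy.1).continuousAt.continuousWithinAt)
        (fun y hy => (hf y (interior_subset hy).1).hasDerivWithinAt)
        (fun y hy => hpos y (by rwa [interior_Ioc] at hy))
    exact hmono ⟨hx, hlt.le⟩ ⟨hac, le_rfl⟩ hlt
  · have hanti : StrictAntiOn f (Ici c) :=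
      strictAntiOn_of_hasDerivWithinAt_neg (convex_Ici c)
        (fun y hy => (hf y (hac.trans_le hy)).continuousAt.continuousWithinAt)
        (fun y hy => (hf y (hac.trans_le (interior_subset hy))).hasDerivWithinAt)
        (fun y hy => hneg y (by rwa [interior_Ici] at hy))
    exact hanti self_mem_Ici hgt.le hgt

theorem stdGaussianDensity_eq_gaussianPDFReal : stdGaussianDensity = gaussianPDFReal 0 1 := by
  ext x
  simp [stdGaussianDensity, gaussianPDFReal, div_eq_inv_mul, mul_comm]

theorem stdGaussianDensity_pos (t : ℝ) : 0 < stdGaussianDensity t := by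
  unfold stdGaussianDensity
  positivity

theorem continuous_stdGaussianDensity : Continuous stdGaussianDensity := by
  unfold stdGaussianDensity
  fun_prop

theorem integrable_stdGaussianDensity : Integrable stdGaussianDensity :=
  stdGaussianDensity_eq_gaussianPDFReal ▸ integrable_gaussianPDFReal 0 1

theorem stdGaussianDensity_neg (t : ℝ) : stdGaussianDensity (-t) = stdGaussianDensity t := by
  simp [stdGaussianDensity]

theorem hasDerivAt_stdGaussianDensity (t : ℝ) :
    HasDerivAt stdGaussianDensity (-t * stdGaussianDensity t) t := by
  refine (((hasDerivAt_pow 2 t).fun_neg.div_const 2).exp.div_const _).congr_deriv ?_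
  simp only [stdGaussianDensity, Nat.cast_ofNat, Nat.add_one_sub_one, pow_one]
  ring

theorem tendsto_mul_stdGaussianDensity_atTop :
    Tendsto (fun s => s * stdGaussianDensity s) atTop (𝓝 0) := by
  have h := ((tendsto_rpow_abs_mul_exp_neg_mul_sq_cocompact (a := 1 / 2) (by norm_num) 1)
    |>.mono_left atTop_le_cocompact).div_const (Real.sqrt (2 * Real.pi))
  rw [zero_div] at h
  refine h.congr' ?_
  filter_upwards [eventually_ge_atTop 0] with s hs
  rw [Real.rpow_one, abs_of_nonneg hs, stdGaussianDensity]
  ring_nf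

theorem stdGaussianCDF_eq_cdf : stdGaussianCDF = cdf (gaussianReal 0 1) := by
  ext t
  rw [cdf_eq_real, measureReal_def, stdGaussianCDF]

theorem stdGaussianCDF_eq_integral (t : ℝ) :
    stdGaussianCDF t = ∫ x in Iic t, stdGaussianDensity x := by
  rw [stdGaussianCDF, gaussianReal_apply_eq_integral 0 one_ne_zero,
    ENNReal.toReal_ofReal (integral_nonneg fun x => gaussianPDFReal_nonneg 0 1 x),
    stdGaussianDensity_eq_gaussianPDFReal]

theorem hasDerivAt_stdGaussianCDF (t : ℝ) :
    HasDerivAt stdGaussianCDF (stdGaussianDensity t) t := by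
  have hψ := integrable_stdGaussianDensity
  have hΨ : stdGaussianCDF =
      fun u => stdGaussianCDF 0 + ∫ x in (0 : ℝ)..u, stdGaussianDensity x := by
    ext u
    rw [← intervalIntegral.integral_Iic_sub_Iic hψ.integrableOn hψ.integrableOn,
      stdGaussianCDF_eq_integral, stdGaussianCDF_eq_integral]
    ring
  rw [hΨ]
  exact (intervalIntegral.integral_hasDerivAt_right hψ.intervalIntegrable
    continuous_stdGaussianDensity.stronglyMeasurable.stronglyMeasurableAtFilter
    continuous_stdGaussianDensity.continuousAt).const_add _

theorem stdGaussianCDF_pos (t : ℝ) : 0 < stdGaussianCDF t :=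
  calc 0 ≤ stdGaussianCDF (t - 1) := ENNReal.toReal_nonneg
    _ < stdGaussianCDF t :=
      strictMono_of_hasDerivAt_pos hasDerivAt_stdGaussianCDF stdGaussianDensity_pos (by linarith)

theorem hasDerivAt_stdGaussianCDF_neg (s : ℝ) :
    HasDerivAt (fun s => stdGaussianCDF (-s)) (-stdGaussianDensity s) s := by
  have h := (hasDerivAt_stdGaussianCDF (-s)).comp s (hasDerivAt_neg s)
  rwa [stdGaussianDensity_neg, mul_neg_one] at h

theorem tendsto_stdGaussianCDF_neg_atTop : Tendsto (fun s => stdGaussianCDF (-s)) atTop (𝓝 0) :=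
  stdGaussianCDF_eq_cdf ▸ (tendsto_cdf_atBot _).comp tendsto_neg_atTop_atBot

def sqrtTailSlope (s : ℝ) : ℝ := stdGaussianCDF (-s) - 2 * s * stdGaussianDensity s

def sqrtTail (s : ℝ) : ℝ := Real.sqrt s * stdGaussianCDF (-s)

theorem hasDerivAt_sqrtTailSlope (s : ℝ) :
    HasDerivAt sqrtTailSlope (stdGaussianDensity s * (2 * s ^ 2 - 3)) s := by
  refine ((hasDerivAt_stdGaussianCDF_neg s).sub
    (((hasDerivAt_id s).const_mul 2).mul (hasDerivAt_stdGaussianDensity s))).congr_deriv ?_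
  simp only [id_eq]
  ring

theorem tendsto_sqrtTailSlope_atTop : Tendsto sqrtTailSlope atTop (𝓝 0) := by
  have h := tendsto_stdGaussianCDF_neg_atTop.sub (tendsto_mul_stdGaussianDensity_atTop.const_mul 2)
  rw [mul_zero, sub_zero] at h
  exact h.congr fun s => by rw [sqrtTailSlope, mul_assoc]

theorem sqrtTailSlope_neg_of_le {s : ℝ} (hs : Real.sqrt (3 / 2) ≤ s) : sqrtTailSlope s < 0 := by
  have hmono : StrictMonoOn sqrtTailSlope (Ici (Real.sqrt (3 / 2))) := by
    refine strictMonoOn_of_hasDerivWithinAt_pos (convex_Ici _)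
      (fun x _ => (hasDerivAt_sqrtTailSlope x).continuousAt.continuousWithinAt)
      (fun x _ => (hasDerivAt_sqrtTailSlope x).hasDerivWithinAt) fun x hx => ?_
    rw [interior_Ici, mem_Ioi, Real.sqrt_lt' (by linarith [Real.sqrt_nonneg (3 / 2)])] at hx
    exact mul_pos (stdGaussianDensity_pos x) (by linarith)
  exact hmono.lt_of_tendsto_atTop tendsto_sqrtTailSlope_atTop hs

theorem strictAntiOn_sqrtTailSlope : StrictAntiOn sqrtTailSlope (Icc 0 (Real.sqrt (3 / 2))) := by
  refine strictAntiOn_of_hasDerivWithinAt_neg (convex_Icc _ _)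
    (fun x _ => (hasDerivAt_sqrtTailSlope x).continuousAt.continuousWithinAt)
    (fun x _ => (hasDerivAt_sqrtTailSlope x).hasDerivWithinAt) fun x hx => ?_
  rw [interior_Icc] at hx
  have hx2 : x ^ 2 < 3 / 2 := (Real.lt_sqrt hx.1.le).1 hx.2
  exact mul_neg_of_pos_of_neg (stdGaussianDensity_pos x) (by linarith)

theorem exists_sqrtTailSlope_sign_change :
    ∃ r, 0 < r ∧ sqrtTailSlope r = 0 ∧ (∀ s ∈ Ioo 0 r, 0 < sqrtTailSlope s) ∧
      ∀ s ∈ Ioi r, sqrtTailSlope s < 0 := by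
  set c := Real.sqrt (3 / 2)
  have hc : 0 < c := by positivity
  have hg0 : sqrtTailSlope 0 = stdGaussianCDF 0 := by simp [sqrtTailSlope]
  obtain ⟨r, hr, hgr⟩ : ∃ r ∈ Icc 0 c, sqrtTailSlope r = 0 :=
    intermediate_value_Icc' hc.le
      (fun x _ => (hasDerivAt_sqrtTailSlope x).continuousAt.continuousWithinAt)
      ⟨(sqrtTailSlope_neg_of_le le_rfl).le, hg0 ▸ (stdGaussianCDF_pos 0).le⟩
  have hr0 : 0 < r := hr.1.lt_of_ne fun h => by
    rw [← h, hg0] at hgr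
    exact (stdGaussianCDF_pos 0).ne' hgr
  have hrc : r < c := hr.2.lt_of_ne fun h => by
    rw [h] at hgr
    exact (sqrtTailSlope_neg_of_le le_rfl).ne hgr
  refine ⟨r, hr0, hgr, fun s hs => ?_, fun s hs => ?_⟩
  · exact hgr ▸ strictAntiOn_sqrtTailSlope ⟨hs.1.le, by linarith [hs.2]⟩ hr hs.2
  · rcases le_or_gt c s with hcs | hsc
    · exact sqrtTailSlope_neg_of_le hcs
    · exact hgr ▸ strictAntiOn_sqrtTailSlope hr ⟨by linarith [hs.out], hsc.le⟩ hs

theorem hasDerivAt_sqrtTail {s : ℝ} (hs : 0 < s) :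
    HasDerivAt sqrtTail (sqrtTailSlope s / (2 * Real.sqrt s)) s := by
  refine ((Real.hasDerivAt_sqrt hs.ne').mul (hasDerivAt_stdGaussianCDF_neg s)).congr_deriv ?_
  have hsqrt : 0 < Real.sqrt s := Real.sqrt_pos.2 hs
  rw [sqrtTailSlope]
  field_simp
  linear_combination (-2 * stdGaussianDensity s) * Real.sq_sqrt hs.le

theorem sqrtTail_lt_of_sign_change {r s : ℝ} (hr : 0 < r)
    (hpos : ∀ y ∈ Ioo 0 r, 0 < sqrtTailSlope y) (hneg : ∀ y ∈ Ioi r, sqrtTailSlope y < 0)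
    (hs : 0 < s) (hsr : s ≠ r) : sqrtTail s < sqrtTail r := by
  have hden : ∀ y ∈ Ioi (0 : ℝ), 0 < 2 * Real.sqrt y := fun y hy => by
    have := Real.sqrt_pos.2 hy
    positivity
  exact apply_lt_of_hasDerivAt_pos_of_neg hr (fun y hy => hasDerivAt_sqrtTail hy)
    (fun y hy => div_pos (hpos y hy) (hden y hy.1))
    (fun y hy => div_neg_of_neg_of_pos (hneg y hy) (hden y (hr.trans hy))) hs hsr

theorem rpow_neg_one_div_four_sq_mul_sqrt {S : ℝ} (hS : 0 < S) :
    (S ^ (-(1 : ℝ) / 4)) ^ 2 * Real.sqrt S = 1 := by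
  rw [← Real.rpow_natCast, ← Real.rpow_mul hS.le, Real.sqrt_eq_rpow, ← Real.rpow_add hS]
  norm_num

theorem maltEff_sqrt_mul_rpow {S s : ℝ} (hS : 0 < S) (hs : 0 ≤ s) :
    maltEff S (Real.sqrt (2 * s) * S ^ (-(1 : ℝ) / 4)) =
      2 * Real.sqrt 2 * S ^ (-(1 : ℝ) / 4) * sqrtTail s := by
  have harg : (Real.sqrt (2 * s) * S ^ (-(1 : ℝ) / 4)) ^ 2 * Real.sqrt S / 2 = s := by
    rw [mul_pow, Real.sq_sqrt (by positivity)]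
    linear_combination s * rpow_neg_one_div_four_sq_mul_sqrt hS
  rw [maltEff, harg, sqrtTail, Real.sqrt_mul zero_le_two]
  ring

theorem exists_eq_sqrt_mul_rpow {S ℓ : ℝ} (hS : 0 < S) (hℓ : 0 < ℓ) :
    ∃ s, 0 < s ∧ ℓ = Real.sqrt (2 * s) * S ^ (-(1 : ℝ) / 4) := by
  have hsqrtS : 0 < Real.sqrt S := Real.sqrt_pos.2 hS
  refine ⟨ℓ ^ 2 * Real.sqrt S / 2, by positivity, ?_⟩
  refine (sq_eq_sq₀ hℓ.le (by positivity)).1 ?_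
  rw [mul_pow, Real.sq_sqrt (by positivity)]
  linear_combination -ℓ ^ 2 * rpow_neg_one_div_four_sq_mul_sqrt hS

/-- The final optimization claim of Proposition ScalingOptimality: there is a unique
`s* > 0` with `Ψ(-s*) = 2 s* ψ(s*)`, and for every `Σ > 0` the efficiency
`eff(ℓ) = 2ℓΨ(-ℓ²√Σ/2)` attains its global maximum on `(0,∞)` exactly at
`ℓ* = √(2s*)·Σ^{-1/4}`. -/
theorem malt_optimal_tuning :
    ∃ sstar : ℝ,
      (0 < sstar ∧ stdGaussianCDF (-sstar) = 2 * sstar * stdGaussianDensity sstar) ∧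
      (∀ s : ℝ, 0 < s → stdGaussianCDF (-s) = 2 * s * stdGaussianDensity s → s = sstar) ∧
      ∀ S : ℝ, 0 < S → ∀ ℓ : ℝ, 0 < ℓ →
        ℓ ≠ Real.sqrt (2 * sstar) * S ^ (-(1 : ℝ) / 4) →
        maltEff S ℓ < maltEff S (Real.sqrt (2 * sstar) * S ^ (-(1 : ℝ) / 4)) := by
  obtain ⟨r, hr, hroot, hpos, hneg⟩ := exists_sqrtTailSlope_sign_change
  have hslope : ∀ s, sqrtTailSlope s = 0 ↔ stdGaussianCDF (-s) = 2 * s * stdGaussianDensity s :=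
    fun s => sub_eq_zero
  refine ⟨r, ⟨hr, (hslope r).1 hroot⟩, fun s hs hs_root => ?_, fun S hS ℓ hℓ hne => ?_⟩
  · rcases lt_trichotomy s r with hlt | heq | hgt
    · exact absurd ((hslope s).2 hs_root) (hpos s ⟨hs, hlt⟩).ne'
    · exact heq
    · exact absurd ((hslope s).2 hs_root) (hneg s hgt).ne
  · obtain ⟨s, hs, rfl⟩ := exists_eq_sqrt_mul_rpow hS hℓ
    have hsr : s ≠ r := by
      rintro rfl
      exact hne rfl
    rw [maltEff_sqrt_mul_rpow hS hs.le, maltEff_sqrt_mul_rpow hS hr.le]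
    exact mul_lt_mul_of_pos_left (sqrtTail_lt_of_sign_change hr hpos hneg hs hsr) (by positivity)

end
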